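/- Let Ω ⊆ ℂ be open and connected, and u, v : Ω → ℂ holomorphic with |u(x)| > |v(x)| for all x ∈ Ω. Define b : Ω → ℂ by b(x) = (u(x)·v′(x) − u′(x)·v(x))/(|u(x)|² − |v(x)|²). Then: (i) either b is identically zero on Ω, or the zero set of b is discrete in Ω (zeroes are isolated); and (ii) at every zero x₀ of b, the antiholomorphic Wirtinger derivative vanishes: (∂b/∂x̄)(x₀) = 0. (On a leaf of a semiholomorphic foliation, the coefficient b of the antiholomorphic part of Bott's connection is either identically zero or has isolated zeroes, and ∂b/∂x̄ = 0 at each isolated zero.) -/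

import Mathlib

/-!
Write `b = W · h` with `W = u v' - u' v` holomorphic and `h = 1 / (|u|² - |v|²)` real-smooth and
nowhere zero on `Ω`. The zeros of `b` in `Ω` are those of `W`, so the identity theorem gives the
dichotomy. At a zero `x₀`, the Leibniz rule gives `∂̄b = W(x₀) ∂̄h + h(x₀) ∂̄W`, and both terms
vanish: the first since `W(x₀) = 0`, the second by Cauchy–Riemann.
-/

open Complex ComplexConjugate Filter

/-- Wirtinger derivative `∂g/∂x̄` of `g : ℂ → ℂ`, via the real Fréchet derivative. -/
noncomputable def wd1bar (g : ℂ → ℂ) (x : ℂ) : ℂ :=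
  (1 / 2 : ℂ) * (fderiv ℝ g x 1 + Complex.I * fderiv ℝ g x Complex.I)

open Topology Set

/- Cauchy–Riemann: a complex-linear derivative satisfies `f' i = i f' 1`, so `∂f/∂x̄ = 0`. -/
theorem wd1bar_eq_zero_of_differentiableAt {f : ℂ → ℂ} {x : ℂ} (hf : DifferentiableAt ℂ f x) :
    wd1bar f x = 0 := by
  have hI : fderiv ℝ f x I = I * fderiv ℝ f x 1 := by
    simp [hf.fderiv_restrictScalars ℝ]
  rw [wd1bar, hI]
  linear_combination (1 / 2 : ℂ) * fderiv ℝ f x 1 * I_sq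

theorem wd1bar_mul {f g : ℂ → ℂ} {x : ℂ} (hf : DifferentiableAt ℝ f x)
    (hg : DifferentiableAt ℝ g x) :
    wd1bar (fun y => f y * g y) x = f x * wd1bar g x + g x * wd1bar f x := by
  rw [wd1bar, fderiv_fun_mul hf hg]
  simp only [wd1bar, add_apply, smul_apply, smul_eq_mul]
  ring

theorem AnalyticOnNhd.eqOn_zero_or_forall_eventually_ne_zero {𝕜 E : Type*}
    [NontriviallyNormedField 𝕜] [NormedAddCommGroup E] [NormedSpace 𝕜 E] [CompleteSpace E]
    {f : 𝕜 → E} {U : Set 𝕜} (hf : AnalyticOnNhd 𝕜 f U) (hU : IsPreconnected U) :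
    EqOn f 0 U ∨ ∀ z ∈ U, ∀ᶠ x in 𝓝[≠] z, f x ≠ 0 := by
  refine or_iff_not_imp_left.2 fun hne z hz => ?_
  refine (hf z hz).eventually_eq_zero_or_eventually_ne_zero.resolve_left fun hzero => ?_
  exact hne (hf.eqOn_zero_of_preconnected_of_eventuallyEq_zero hU hz hzero)

theorem ofReal_sq_norm_sub_sq_norm_ne_zero {F : Type*} [NormedAddCommGroup F] {a b : F}
    (h : ‖b‖ < ‖a‖) : ((‖a‖ ^ 2 - ‖b‖ ^ 2 : ℝ) : ℂ) ≠ 0 := by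
  have : ‖b‖ ^ 2 < ‖a‖ ^ 2 := pow_lt_pow_left₀ h (norm_nonneg _) two_ne_zero
  exact ofReal_ne_zero.2 (sub_pos.2 this).ne'

theorem DifferentiableAt.inv_ofReal_sq_norm_sub_sq_norm {E F : Type*} [NormedAddCommGroup E]
    [NormedSpace ℝ E] [NormedAddCommGroup F] [InnerProductSpace ℝ F] {u v : E → F} {x : E}
    (hu : DifferentiableAt ℝ u x) (hv : DifferentiableAt ℝ v x) (huv : ‖v x‖ < ‖u x‖) :
    DifferentiableAt ℝ (fun y => (((‖u y‖ ^ 2 - ‖v y‖ ^ 2 : ℝ) : ℂ))⁻¹) x :=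
  (ofRealCLM.differentiableAt.comp x (hu.norm_sq ℝ |>.sub (hv.norm_sq ℝ))).inv
    (ofReal_sq_norm_sub_sq_norm_ne_zero huv)

/-- On a leaf of a semiholomorphic foliation with holonomy having linear part
`φ_x(y) = u(x)y + v(x)·conj(y)` (`u, v` holomorphic on a connected open `Ω`, `|u| > |v|`),
the coefficient `b = (u·v′ − u′·v)/(|u|² − |v|²)` of the antiholomorphic part of Bott's
connection is either identically zero or has isolated zeroes; moreover `∂b/∂x̄ = 0` at
every zero of `b`. -/
theorem stmt12 (Ω : Set ℂ) (hΩ : IsOpen Ω) (hconn : IsConnected Ω)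
    (u v : ℂ → ℂ)
    (hu : DifferentiableOn ℂ u Ω) (hv : DifferentiableOn ℂ v Ω)
    (huv : ∀ x ∈ Ω, ‖v x‖ < ‖u x‖)
    (b : ℂ → ℂ)
    (hb : ∀ x : ℂ, b x = (u x * deriv v x - deriv u x * v x) /
        ((‖u x‖ ^ 2 - ‖v x‖ ^ 2 : ℝ) : ℂ)) :
    ((∀ x ∈ Ω, b x = 0) ∨
      (∀ x₀ ∈ Ω, b x₀ = 0 → ∀ᶠ x in nhdsWithin x₀ {x₀}ᶜ, b x ≠ 0)) ∧
    (∀ x₀ ∈ Ω, b x₀ = 0 → wd1bar b x₀ = 0) := by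
  set W : ℂ → ℂ := fun x => u x * deriv v x - deriv u x * v x
  set h : ℂ → ℂ := fun x => (((‖u x‖ ^ 2 - ‖v x‖ ^ 2 : ℝ) : ℂ))⁻¹
  have hbWh : b = fun x => W x * h x := funext fun x => (hb x).trans (div_eq_mul_inv _ _)
  have hh : ∀ x ∈ Ω, h x ≠ 0 := fun x hx =>
    inv_ne_zero (ofReal_sq_norm_sub_sq_norm_ne_zero (huv x hx))
  have hua := hu.analyticOnNhd hΩ
  have hva := hv.analyticOnNhd hΩ
  have hW : AnalyticOnNhd ℂ W Ω := (hua.mul hva.deriv).sub (hua.deriv.mul hva)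
  refine ⟨?_, fun x₀ hx₀ hbx₀ => ?_⟩
  · rcases hW.eqOn_zero_or_forall_eventually_ne_zero hconn.isPreconnected with hW0 | hWne
    · exact .inl fun x hx => by simp [hbWh, hW0 hx]
    · refine .inr fun x₀ hx₀ _ => ?_
      filter_upwards [hWne x₀ hx₀, eventually_nhdsWithin_of_eventually_nhds
        (hΩ.eventually_mem hx₀)] with x hWx hx
      simpa [hbWh] using mul_ne_zero hWx (hh x hx)
  · have hWx₀ : W x₀ = 0 := by
      simpa [hbWh, hh x₀ hx₀] using hbx₀
    have hWd := (hW x₀ hx₀).differentiableAt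
    have hhd : DifferentiableAt ℝ h x₀ :=
      ((hua x₀ hx₀).differentiableAt.restrictScalars ℝ).inv_ofReal_sq_norm_sub_sq_norm
        ((hva x₀ hx₀).differentiableAt.restrictScalars ℝ) (huv x₀ hx₀)
    rw [hbWh, wd1bar_mul (hWd.restrictScalars ℝ) hhd, hWx₀,
      wd1bar_eq_zero_of_differentiableAt hWd]
    ring
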